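/- arXiv:2105.05026 — 3 statements merged into one kernel-verified Lean document; each statement's English description precedes it below -/
import Mathlib

section
/- Let c ≥ 2 and let ℓ: ℝ → ℝ be ρ-Lipschitz with 0 ≤ ℓ(z) ≤ B for all z ∈ ℝ. Then for every nontrivial y ∈ {−1,+1}^c and all u, v ∈ ℝ^c: |L_{u2}(u,y) − L_{u2}(v,y)| ≤ (ρ√c/(c−1))·‖u−v‖₂, and L_{u2}(v,y) ≤ (1 + 1/(c−1))·B. -/
open scoped Classical BigOperators

/-- The set of positive-label indices of `y ∈ {-1,+1}^c`. -/
noncomputable def Sp {c : ℕ} (y : Fin c → ℝ) : Finset (Fin c) :=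
  Finset.univ.filter (fun j => y j = 1)

/-- The set of negative-label indices of `y ∈ {-1,+1}^c`. -/
noncomputable def Sm {c : ℕ} (y : Fin c → ℝ) : Finset (Fin c) :=
  Finset.univ.filter (fun j => y j = -1)

/-- The univariate surrogate loss `L_{u2}`. -/
noncomputable def Lu2 {c : ℕ} (ℓ : ℝ → ℝ) (v y : Fin c → ℝ) : ℝ :=
  (1 / (((Sp y).card : ℝ) * ((Sm y).card : ℝ))) * ∑ j, ℓ (y j * v j)

/-! The labels split `{1, …, c}` into nonempty classes of sizes `p + q = c`, so the normalising
weight satisfies `p q ≥ p + q - 1 = c - 1` (as `(p - 1)(q - 1) ≥ 0`). Since `|y_j| = 1`, each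
summand `ℓ (y_j v_j)` is `ρ`-Lipschitz in `v_j`, and Cauchy–Schwarz gives
`∑ |u_j - v_j| ≤ √c ‖u - v‖₂`; the bound on `L_{u2}` is `c B / (c - 1)`. -/

open Finset

lemma sum_abs_le_sqrt_card_mul_sqrt_sum_sq {ι : Type*} (s : Finset ι) (f : ι → ℝ) :
    ∑ i ∈ s, |f i| ≤ √(#s : ℝ) * √(∑ i ∈ s, f i ^ 2) := by
  simpa using Real.sum_mul_le_sqrt_mul_sqrt s (fun _ => 1) (fun i => |f i|)

lemma abs_sum_sub_le_mul_sum_abs_sub {ι : Type*} (s : Finset ι) {ℓ : ℝ → ℝ} {ρ : ℝ}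
    (hLip : ∀ a b : ℝ, |ℓ a - ℓ b| ≤ ρ * |a - b|) {y : ι → ℝ} (hy : ∀ j, |y j| = 1)
    (u v : ι → ℝ) :
    |∑ j ∈ s, (ℓ (y j * u j) - ℓ (y j * v j))| ≤ ρ * ∑ j ∈ s, |u j - v j| := by
  rw [mul_sum]
  refine (abs_sum_le_sum_abs _ _).trans (sum_le_sum fun j _ => ?_)
  calc |ℓ (y j * u j) - ℓ (y j * v j)| ≤ ρ * |y j * u j - y j * v j| := hLip _ _
    _ = ρ * |u j - v j| := by rw [← mul_sub, abs_mul, hy j, one_mul]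

lemma add_sub_one_le_mul {p q : ℝ} (hp : 1 ≤ p) (hq : 1 ≤ q) : p + q - 1 ≤ p * q := by
  nlinarith

section Labels

variable {c : ℕ} {y : Fin c → ℝ}

lemma disjoint_Sp_Sm (y : Fin c → ℝ) : Disjoint (Sp y) (Sm y) := by
  rw [Sp, Sm, disjoint_filter]
  intro j _ h
  rw [h]
  norm_num

lemma Sp_union_Sm (hy : ∀ j, y j = 1 ∨ y j = -1) : Sp y ∪ Sm y = univ := by
  ext j
  simpa [Sp, Sm] using hy j

lemma card_Sp_add_card_Sm (hy : ∀ j, y j = 1 ∨ y j = -1) : #(Sp y) + #(Sm y) = c := by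
  rw [← card_union_of_disjoint (disjoint_Sp_Sm y), Sp_union_Sm hy, card_univ, Fintype.card_fin]

lemma two_le_of_Sp_nonempty_of_Sm_nonempty (hyp : (Sp y).Nonempty) (hym : (Sm y).Nonempty) :
    2 ≤ c := by
  have hcard : #(Sp y ∪ Sm y) ≤ c := by simpa using card_le_univ (Sp y ∪ Sm y)
  rw [card_union_of_disjoint (disjoint_Sp_Sm y)] at hcard
  have := hyp.card_pos
  have := hym.card_pos
  omega

lemma sub_one_le_card_Sp_mul_card_Sm (hy : ∀ j, y j = 1 ∨ y j = -1)
    (hyp : (Sp y).Nonempty) (hym : (Sm y).Nonempty) :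
    (c : ℝ) - 1 ≤ #(Sp y) * #(Sm y) := by
  have hp : (1 : ℝ) ≤ #(Sp y) := by exact_mod_cast hyp.card_pos
  have hq : (1 : ℝ) ≤ #(Sm y) := by exact_mod_cast hym.card_pos
  have hc : (#(Sp y) : ℝ) + #(Sm y) = c := by exact_mod_cast card_Sp_add_card_Sm hy
  exact hc ▸ add_sub_one_le_mul hp hq

end Labels

lemma Lu2_sub_Lu2 {c : ℕ} (ℓ : ℝ → ℝ) (u v y : Fin c → ℝ) :
    Lu2 ℓ u y - Lu2 ℓ v y =
      1 / ((#(Sp y) : ℝ) * #(Sm y)) * ∑ j, (ℓ (y j * u j) - ℓ (y j * v j)) := by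
  rw [Lu2, Lu2, ← mul_sub, ← sum_sub_distrib]

theorem stmt0_general (c : ℕ) (ℓ : ℝ → ℝ) (ρ B : ℝ)
    (hLip : ∀ a b : ℝ, |ℓ a - ℓ b| ≤ ρ * |a - b|)
    (hℓ : ∀ z : ℝ, 0 ≤ ℓ z ∧ ℓ z ≤ B)
    (y : Fin c → ℝ) (hy : ∀ j, y j = 1 ∨ y j = -1)
    (hyp : (Sp y).Nonempty) (hym : (Sm y).Nonempty)
    (u v : Fin c → ℝ) :
    |Lu2 ℓ u y - Lu2 ℓ v y| ≤
        ρ * Real.sqrt c / ((c : ℝ) - 1) * Real.sqrt (∑ j, (u j - v j) ^ 2) ∧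
      Lu2 ℓ v y ≤ (1 + 1 / ((c : ℝ) - 1)) * B := by
  have hc : (0 : ℝ) < c - 1 := by
    have : (2 : ℝ) ≤ c := by exact_mod_cast two_le_of_Sp_nonempty_of_Sm_nonempty hyp hym
    linarith
  have hweight : 1 / ((#(Sp y) : ℝ) * #(Sm y)) ≤ 1 / ((c : ℝ) - 1) :=
    one_div_le_one_div_of_le hc (sub_one_le_card_Sp_mul_card_Sm hy hyp hym)
  have hweight_nonneg : (0 : ℝ) ≤ 1 / ((c : ℝ) - 1) := (one_div_pos.2 hc).le
  have hρ : 0 ≤ ρ := by simpa using (abs_nonneg _).trans (hLip 0 1)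
  have hy_abs (j : Fin c) : |y j| = 1 := by rcases hy j with h | h <;> simp [h]
  constructor
  · calc |Lu2 ℓ u y - Lu2 ℓ v y|
        = 1 / ((#(Sp y) : ℝ) * #(Sm y)) * |∑ j, (ℓ (y j * u j) - ℓ (y j * v j))| := by
          rw [Lu2_sub_Lu2, abs_mul, abs_of_nonneg (by positivity)]
      _ ≤ 1 / ((c : ℝ) - 1) * (ρ * ∑ j, |u j - v j|) :=
          mul_le_mul hweight (abs_sum_sub_le_mul_sum_abs_sub _ hLip hy_abs u v) (abs_nonneg _)
            hweight_nonneg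
      _ ≤ 1 / ((c : ℝ) - 1) * (ρ * (√c * √(∑ j, (u j - v j) ^ 2))) := by
          gcongr
          simpa using sum_abs_le_sqrt_card_mul_sqrt_sum_sq univ (u - v)
      _ = ρ * √c / ((c : ℝ) - 1) * √(∑ j, (u j - v j) ^ 2) := by ring
  · calc Lu2 ℓ v y ≤ 1 / ((c : ℝ) - 1) * ∑ _j : Fin c, B :=
          mul_le_mul hweight (sum_le_sum fun j _ => (hℓ _).2)
            (sum_nonneg fun j _ => (hℓ _).1) hweight_nonneg
      _ = (1 + 1 / ((c : ℝ) - 1)) * B := by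
          rw [sum_const, card_univ, Fintype.card_fin, nsmul_eq_mul]
          field_simp
          ring

theorem stmt0 (c : ℕ) (hc : 2 ≤ c) (ℓ : ℝ → ℝ) (ρ B : ℝ)
    (hLip : ∀ a b : ℝ, |ℓ a - ℓ b| ≤ ρ * |a - b|)
    (hℓ : ∀ z : ℝ, 0 ≤ ℓ z ∧ ℓ z ≤ B)
    (y : Fin c → ℝ) (hy : ∀ j, y j = 1 ∨ y j = -1)
    (hyp : (Sp y).Nonempty) (hym : (Sm y).Nonempty)
    (u v : Fin c → ℝ) :
    |Lu2 ℓ u y - Lu2 ℓ v y| ≤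
        ρ * Real.sqrt c / ((c : ℝ) - 1) * Real.sqrt (∑ j, (u j - v j) ^ 2) ∧
      Lu2 ℓ v y ≤ (1 + 1 / ((c : ℝ) - 1)) * B :=
  stmt0_general c ℓ ρ B hLip hℓ y hy hyp hym u v
end

section
/- Let ℓ: ℝ → ℝ satisfy 1[z ≤ 0] ≤ ℓ(z) for all z ∈ ℝ. Then for every c ≥ 2, every nontrivial y ∈ {−1,+1}^c and every v ∈ ℝ^c: L_r(v,y) ≤ L_{u3}(v,y). -/
open scoped Classical BigOperators

/-- The ranking loss `L_r`. -/
noncomputable def Lr {c : ℕ} (v y : Fin c → ℝ) : ℝ :=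
  (1 / (((Sp y).card : ℝ) * ((Sm y).card : ℝ))) *
    ∑ p ∈ Sp y, ∑ q ∈ Sm y, (if v p ≤ v q then (1 : ℝ) else 0)

/-- The reweighted univariate surrogate loss `L_{u3}`. -/
noncomputable def Lu3 {c : ℕ} (ℓ : ℝ → ℝ) (v y : Fin c → ℝ) : ℝ :=
  (1 / ((Sp y).card : ℝ)) * ∑ p ∈ Sp y, ℓ (v p) +
    (1 / ((Sm y).card : ℝ)) * ∑ q ∈ Sm y, ℓ (-(v q))

/-!
If `v p ≤ v q` then `v p ≤ 0` or `-v q ≤ 0`, so each pairwise indicator `1[v p ≤ v q]` is at most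
`ℓ (v p) + ℓ (-v q)`; averaging over all pairs `(p, q)` splits the right-hand side into the two
separate averages of `L_{u3}`.
-/

lemma ite_le_le_ite_nonpos_add_ite_nonpos (a b : ℝ) :
    (if a ≤ b then (1 : ℝ) else 0) ≤
      (if a ≤ 0 then (1 : ℝ) else 0) + (if -b ≤ 0 then (1 : ℝ) else 0) := by
  split_ifs <;> linarith

lemma ite_le_le_loss_add_loss {ℓ : ℝ → ℝ}
    (hind : ∀ z : ℝ, (if z ≤ 0 then (1 : ℝ) else 0) ≤ ℓ z) (a b : ℝ) :
    (if a ≤ b then (1 : ℝ) else 0) ≤ ℓ a + ℓ (-b) :=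
  (ite_le_le_ite_nonpos_add_ite_nonpos a b).trans (add_le_add (hind a) (hind (-b)))

lemma Finset.one_div_card_mul_card_mul_sum_sum_add {α β : Type*} {s : Finset α} {t : Finset β}
    (hs : s.Nonempty) (ht : t.Nonempty) (f : α → ℝ) (g : β → ℝ) :
    1 / ((s.card : ℝ) * t.card) * ∑ i ∈ s, ∑ j ∈ t, (f i + g j) =
      1 / (s.card : ℝ) * ∑ i ∈ s, f i + 1 / (t.card : ℝ) * ∑ j ∈ t, g j := by
  have hs' : (s.card : ℝ) ≠ 0 := by exact_mod_cast hs.card_ne_zero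
  have ht' : (t.card : ℝ) ≠ 0 := by exact_mod_cast ht.card_ne_zero
  simp only [Finset.sum_add_distrib, Finset.sum_const, nsmul_eq_mul, ← Finset.mul_sum]
  field_simp

theorem stmt4_general (ℓ : ℝ → ℝ)
    (hind : ∀ z : ℝ, (if z ≤ 0 then (1 : ℝ) else 0) ≤ ℓ z)
    (c : ℕ)
    (y : Fin c → ℝ)
    (hyp : (Sp y).Nonempty) (hym : (Sm y).Nonempty)
    (v : Fin c → ℝ) :
    Lr v y ≤ Lu3 ℓ v y := by
  rw [Lr, Lu3, ← Finset.one_div_card_mul_card_mul_sum_sum_add hyp hym]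
  gcongr with p _ q _
  exact ite_le_le_loss_add_loss hind (v p) (v q)

theorem stmt4 (ℓ : ℝ → ℝ)
    (hind : ∀ z : ℝ, (if z ≤ 0 then (1 : ℝ) else 0) ≤ ℓ z)
    (c : ℕ) (hc : 2 ≤ c)
    (y : Fin c → ℝ) (hy : ∀ j, y j = 1 ∨ y j = -1)
    (hyp : (Sp y).Nonempty) (hym : (Sm y).Nonempty)
    (v : Fin c → ℝ) :
    Lr v y ≤ Lu3 ℓ v y :=
  stmt4_general ℓ hind c y hyp hym v
end

section
/- Let c ≥ 1, let β⁺, β⁻: {−1,+1}^c → (0,∞) be positive penalty functions, and let P be a probability distribution on {−1,+1}^c such that φ_j^+(P) > 0 and φ_j^-(P) > 0 for every j ∈ {1,…,c}. Then the conditional surrogate risk f ↦ Σ_{y∈{−1,+1}^c} P(y)·L_u(f,y), with base loss ℓ(z) = e^{−z}, has a unique global minimizer f* over ℝ^c, given coordinatewise by f*_j = (1/2)·ln(φ_j^+(P)/φ_j^-(P)). -/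
/-!
Exchanging the sums over labels and coordinates splits the risk into
`∑ j, (φ_j⁺ e^{-f_j} + φ_j⁻ e^{f_j})`. With `s_j = log (φ_j⁺ / φ_j⁻) / 2` the two terms balance at
`f_j = s_j`, and the `j`-th summand equals `2 φ_j⁻ e^{s_j} cosh (f_j - s_j)`; since `cosh ≥ 1`
with equality only at `0`, every summand is minimised exactly at `f_j = s_j`.
-/

open scoped BigOperators

/-- The sign value of a Boolean label: `true ↦ +1`, `false ↦ -1`. -/
def toSign (b : Bool) : ℝ := if b then 1 else -1

/-- The general reweighted univariate surrogate loss `L_u`. -/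
noncomputable def Lu {c : ℕ} (βp βm : (Fin c → Bool) → ℝ) (ℓ : ℝ → ℝ)
    (v : Fin c → ℝ) (y : Fin c → Bool) : ℝ :=
  ∑ j, (if y j then βp y else βm y) * ℓ (toSign (y j) * v j)

/-- The conditional surrogate risk. -/
noncomputable def risk {c : ℕ} (βp βm : (Fin c → Bool) → ℝ) (ℓ : ℝ → ℝ)
    (P : (Fin c → Bool) → ℝ) (f : Fin c → ℝ) : ℝ :=
  ∑ y, P y * Lu βp βm ℓ f y

/-- `φ_j^+(P)`. -/
def phiP {c : ℕ} (β P : (Fin c → Bool) → ℝ) (j : Fin c) : ℝ :=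
  ∑ y ∈ Finset.univ.filter (fun y : Fin c → Bool => y j = true), β y * P y

/-- `φ_j^-(P)`. -/
def phiM {c : ℕ} (β P : (Fin c → Bool) → ℝ) (j : Fin c) : ℝ :=
  ∑ y ∈ Finset.univ.filter (fun y : Fin c → Bool => y j = false), β y * P y

open Finset Real

theorem risk_eq_sum_phi {c : ℕ} (βp βm : (Fin c → Bool) → ℝ) (ℓ : ℝ → ℝ)
    (P : (Fin c → Bool) → ℝ) (f : Fin c → ℝ) :
    risk βp βm ℓ P f = ∑ j, (phiP βp P j * ℓ (f j) + phiM βm P j * ℓ (-f j)) := by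
  simp only [risk, Lu, phiP, phiM, mul_sum, sum_mul]
  rw [sum_comm]
  refine sum_congr rfl fun j _ => ?_
  rw [← sum_filter_add_sum_filter_not univ (fun y : Fin c → Bool => y j = true)]
  congr 1
  · refine sum_congr rfl fun y hy => ?_
    simp only [(mem_filter.mp hy).2, ↓reduceIte, toSign, one_mul]
    ring
  · refine sum_congr (by simp) fun y hy => ?_
    simp only [(mem_filter.mp hy).2, Bool.false_eq_true, ↓reduceIte, toSign, neg_mul, one_mul]
    ring

theorem mul_exp_neg_add_mul_exp_eq_cosh {a b : ℝ} (ha : 0 < a) (hb : 0 < b) (t : ℝ) :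
    a * exp (-t) + b * exp t
      = 2 * (b * exp (log (a / b) / 2)) * cosh (t - log (a / b) / 2) := by
  set s := log (a / b) / 2
  have hbalance : a * exp (-s) = b * exp s := by
    have h2s : exp s * exp s = a / b := by
      rw [← exp_add, add_halves, exp_log (div_pos ha hb)]
    rw [exp_neg, ← div_eq_mul_inv, div_eq_iff (exp_pos s).ne', mul_assoc, h2s]
    field_simp
  have hsplit : exp t = exp s * exp (t - s) ∧ exp (-t) = exp (-s) * exp (-(t - s)) := by
    constructor <;> rw [← exp_add] <;> ring_nf
  rw [cosh_eq, hsplit.1, hsplit.2, ← mul_assoc, hbalance]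
  ring

theorem mul_exp_neg_add_mul_exp_le {a b : ℝ} (ha : 0 < a) (hb : 0 < b) (t : ℝ) :
    a * exp (-(log (a / b) / 2)) + b * exp (log (a / b) / 2) ≤ a * exp (-t) + b * exp t := by
  rw [mul_exp_neg_add_mul_exp_eq_cosh ha hb, mul_exp_neg_add_mul_exp_eq_cosh ha hb, sub_self,
    cosh_zero]
  gcongr
  exact one_le_cosh _

theorem mul_exp_neg_add_mul_exp_lt {a b t : ℝ} (ha : 0 < a) (hb : 0 < b)
    (ht : t ≠ log (a / b) / 2) :
    a * exp (-(log (a / b) / 2)) + b * exp (log (a / b) / 2) < a * exp (-t) + b * exp t := by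
  rw [mul_exp_neg_add_mul_exp_eq_cosh ha hb, mul_exp_neg_add_mul_exp_eq_cosh ha hb, sub_self,
    cosh_zero]
  gcongr
  exact one_lt_cosh.mpr (sub_ne_zero.mpr ht)

theorem stmt9_general (c : ℕ)
    (βp βm : (Fin c → Bool) → ℝ)
    (P : (Fin c → Bool) → ℝ)
    (hφp : ∀ j, 0 < phiP βp P j) (hφm : ∀ j, 0 < phiM βm P j)
    (fstar : Fin c → ℝ)
    (hfstar : ∀ j, fstar j = (1 / 2) * Real.log (phiP βp P j / phiM βm P j)) :
    (∀ f : Fin c → ℝ,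
        risk βp βm (fun z => Real.exp (-z)) P fstar ≤
          risk βp βm (fun z => Real.exp (-z)) P f) ∧
      (∀ f : Fin c → ℝ,
        (∀ g : Fin c → ℝ,
            risk βp βm (fun z => Real.exp (-z)) P f ≤
              risk βp βm (fun z => Real.exp (-z)) P g) →
          f = fstar) := by
  obtain rfl : fstar = fun j => log (phiP βp P j / phiM βm P j) / 2 :=
    funext fun j => by rw [hfstar]; ring
  simp only [risk_eq_sum_phi, neg_neg]
  refine ⟨fun f => sum_le_sum fun j _ => mul_exp_neg_add_mul_exp_le (hφp j) (hφm j) (f j),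
    fun f hmin => ?_⟩
  by_contra hne
  obtain ⟨j, hj⟩ := Function.ne_iff.mp hne
  exact (hmin _).not_gt <| sum_lt_sum
    (fun i _ => mul_exp_neg_add_mul_exp_le (hφp i) (hφm i) (f i))
    ⟨j, mem_univ j, mul_exp_neg_add_mul_exp_lt (hφp j) (hφm j) hj⟩

theorem stmt9 (c : ℕ) (hc : 1 ≤ c)
    (βp βm : (Fin c → Bool) → ℝ) (hβp : ∀ y, 0 < βp y) (hβm : ∀ y, 0 < βm y)
    (P : (Fin c → Bool) → ℝ) (hP : ∀ y, 0 ≤ P y) (hP1 : (∑ y, P y) = 1)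
    (hφp : ∀ j, 0 < phiP βp P j) (hφm : ∀ j, 0 < phiM βm P j)
    (fstar : Fin c → ℝ)
    (hfstar : ∀ j, fstar j = (1 / 2) * Real.log (phiP βp P j / phiM βm P j)) :
    (∀ f : Fin c → ℝ,
        risk βp βm (fun z => Real.exp (-z)) P fstar ≤
          risk βp βm (fun z => Real.exp (-z)) P f) ∧
      (∀ f : Fin c → ℝ,
        (∀ g : Fin c → ℝ,
            risk βp βm (fun z => Real.exp (-z)) P f ≤
              risk βp βm (fun z => Real.exp (-z)) P g) →
          f = fstar) :=
  stmt9_general c βp βm P hφp hφm fstar hfstar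
end
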